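/- The commutator subgroups [UB_3, UB_3] and [UB_4, UB_4] of the universal braid groups UB_3 and UB_4 are not finitely generated (as subgroups of UB_3 and UB_4 respectively). -/

import Mathlib

namespace UnivBraid

/-- The free-group generator word for `σ_{i+1}` (0-indexed `i`). -/
def σw (n : ℕ) (i : Fin (n-1)) : FreeGroup (Fin (n-1) ⊕ Fin (n-1)) := FreeGroup.of (Sum.inl i)

/-- The free-group generator word for `ρ_{i+1}` (0-indexed `i`). -/
def ρw (n : ℕ) (i : Fin (n-1)) : FreeGroup (Fin (n-1) ⊕ Fin (n-1)) := FreeGroup.of (Sum.inr i)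

/-- Defining relators of the universal braid group `UB_n`. -/
def ubRels (n : ℕ) : Set (FreeGroup (Fin (n-1) ⊕ Fin (n-1))) :=
  {r | ∃ i j : Fin (n-1), ((i:ℕ)+1 < (j:ℕ) ∨ (j:ℕ)+1 < (i:ℕ)) ∧
      r = σw n i * σw n j * (σw n i)⁻¹ * (σw n j)⁻¹} ∪
  {r | ∃ i j : Fin (n-1), (j:ℕ) = (i:ℕ)+1 ∧
      r = σw n i * σw n j * σw n i * (σw n j * σw n i * σw n j)⁻¹} ∪
  {r | ∃ i j : Fin (n-1), ((i:ℕ)+1 < (j:ℕ) ∨ (j:ℕ)+1 < (i:ℕ)) ∧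
      r = ρw n i * ρw n j * (ρw n i)⁻¹ * (ρw n j)⁻¹} ∪
  {r | ∃ i j : Fin (n-1), ((i:ℕ)+1 < (j:ℕ) ∨ (j:ℕ)+1 < (i:ℕ)) ∧
      r = σw n i * ρw n j * (σw n i)⁻¹ * (ρw n j)⁻¹}

/-- Bardakov's universal braid group `UB_n`. -/
abbrev UB (n : ℕ) := PresentedGroup (ubRels n)

end UnivBraid

/-! Sending every `σᵢ` and `ρ₃` to `1`, `ρ₁` to a lamp and `ρ₂` to the shift defines, for `n ≤ 4`
(where `ρ₁, ρ₃` is the only pair of far-apart `ρ`s), a homomorphism from `UB_n` to the wreath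
product `ℤ/2 ≀ ℤ`. It maps `[UB_n, UB_n]` into the commutator subgroup of the wreath product, which
lies in the base group, an elementary abelian `2`-group; so if `[UB_n, UB_n]` were finitely
generated its image would be finite. But the image contains the pairwise distinct commutators
`[lamp, shiftᵏ]`, `k ∈ ℤ`. -/

open scoped commutatorElement
open SemidirectProduct Multiplicative

theorem Subgroup.FG.map {G H : Type*} [Group G] [Group H] {K : Subgroup G} (hK : K.FG)
    (f : G →* H) : (K.map f).FG := by
  obtain ⟨S, rfl, hS⟩ := (Subgroup.fg_iff K).mp hK
  exact (Subgroup.fg_iff _).mpr ⟨f '' S, (MonoidHom.map_closure f S).symm, hS.image f⟩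

theorem Subgroup.FG.finite_of_forall_isOfFinOrder {G : Type*} [Group G] {H : Subgroup G}
    [IsMulCommutative H] (hH : H.FG) (htors : ∀ x ∈ H, IsOfFinOrder x) : Finite H := by
  open scoped IsMulCommutative in
  have : Group.FG H := (Group.fg_iff_subgroup_fg H).mpr hH
  exact CommGroup.finite_of_fg_isMulTorsion H fun x => Submonoid.isOfFinOrder_coe.mp (htors x x.2)

namespace SemidirectProduct

theorem commutator_le_range_inl {N Q : Type*} [Group N] [CommGroup Q] {φ : Q →* MulAut N} :
    commutator (N ⋊[φ] Q) ≤ (inl : N →* N ⋊[φ] Q).range :=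
  (range_inl_eq_ker_rightHom (φ := φ)).symm ▸ Abelianization.commutator_subset_ker rightHom

theorem finite_of_fg_of_le_commutator {N Q : Type*} [CommGroup N] [CommGroup Q]
    {φ : Q →* MulAut N} (hN : IsMulTorsion N) {H : Subgroup (N ⋊[φ] Q)}
    (hH : H ≤ commutator (N ⋊[φ] Q)) (hfg : H.FG) : Finite H := by
  have hinl : ∀ x ∈ H, ∃ n, inl n = x := fun x hx => commutator_le_range_inl (hH hx)
  have : IsMulCommutative H := .of_setLike_mul_comm fun x hx y hy => by
    obtain ⟨m, rfl⟩ := hinl x hx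
    obtain ⟨n, rfl⟩ := hinl y hy
    rw [← map_mul, ← map_mul, mul_comm]
  refine hfg.finite_of_forall_isOfFinOrder fun x hx => ?_
  obtain ⟨n, rfl⟩ := hinl x hx
  exact inl.isOfFinOrder (hN n)

end SemidirectProduct

/-- The unrestricted wreath product `ℤ/2 ≀ ℤ`; the lamplighter group is its subgroup generated by
`lampAt 0` and `shift`. -/
abbrev UnrestrictedLamplighter : Type :=
  (ℤ → Multiplicative (ZMod 2)) ⋊[mulAutArrow] Multiplicative ℤ

namespace UnrestrictedLamplighter

def lampAt (k : ℤ) : UnrestrictedLamplighter := inl (Pi.mulSingle k (ofAdd 1))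

def shift : UnrestrictedLamplighter := inr (ofAdd 1)

theorem isMulTorsion_base : IsMulTorsion (ℤ → Multiplicative (ZMod 2)) := by
  have hsq : ∀ t : Multiplicative (ZMod 2), t ^ 2 = 1 := by decide
  exact fun x => isOfFinOrder_iff_pow_eq_one.mpr ⟨2, two_pos, funext fun i => hsq (x i)⟩

theorem lampAt_injective : Function.Injective lampAt := by
  intro j k h
  have hj := congrFun (inl_injective h) j
  by_contra hjk
  simp [hjk] at hj

theorem lampAt_inv (k : ℤ) : (lampAt k)⁻¹ = lampAt k := by
  rw [lampAt, ← map_inv, ← Pi.mulSingle_inv]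
  rfl

theorem shift_zpow (k : ℤ) : shift ^ k = inr (ofAdd k) := by
  rw [shift, ← map_zpow, ← ofAdd_zsmul, smul_eq_mul, mul_one]

theorem shift_zpow_conj_lampAt (j k : ℤ) :
    shift ^ k * lampAt j * (shift ^ k)⁻¹ = lampAt (j + k) := by
  rw [shift_zpow, ← map_inv, lampAt, ← inl_aut]
  congr 1
  ext i
  change (Pi.mulSingle j (ofAdd 1) : ℤ → Multiplicative (ZMod 2)) (-k + i) =
    (Pi.mulSingle (j + k) (ofAdd 1) : ℤ → Multiplicative (ZMod 2)) i
  simp only [Pi.mulSingle_apply, neg_add_eq_iff_eq_add, add_comm k]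

theorem commutator_lampAt_zero_shift_zpow (k : ℤ) :
    ⁅lampAt 0, shift ^ k⁆ = lampAt 0 * lampAt k := by
  rw [commutatorElement_def, mul_assoc, mul_assoc, ← mul_assoc (shift ^ k), lampAt_inv,
    shift_zpow_conj_lampAt, zero_add]

theorem commutator_lampAt_zero_shift_zpow_injective :
    Function.Injective fun k : ℤ => ⁅lampAt 0, shift ^ k⁆ := by
  intro j k h
  simp only [commutator_lampAt_zero_shift_zpow, mul_right_inj] at h
  exact lampAt_injective h

end UnrestrictedLamplighter

namespace UnivBraid

variable {n : ℕ} {H : Type*} [Group H]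

def rhoLiftGens (a b : H) : Fin (n-1) ⊕ Fin (n-1) → H :=
  Sum.elim 1 fun i => if (i : ℕ) = 0 then a else if (i : ℕ) = 1 then b else 1

theorem lift_rhoLiftGens_ubRels (hn : n ≤ 4) (a b : H) :
    ∀ r ∈ ubRels n, FreeGroup.lift (rhoLiftGens a b) r = 1 := by
  rintro r (((⟨i, j, -, rfl⟩ | ⟨i, j, -, rfl⟩) | ⟨i, j, hij, rfl⟩) | ⟨i, j, -, rfl⟩)
  · simp [σw, rhoLiftGens]
  · simp [σw, rhoLiftGens]
  · have hi := i.isLt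
    have hj := j.isLt
    obtain ⟨hi2, hj2⟩ | ⟨hi2, hj2⟩ : (i : ℕ) = 0 ∧ (j : ℕ) = 2 ∨ (i : ℕ) = 2 ∧ (j : ℕ) = 0 := by
      omega
    all_goals simp [ρw, rhoLiftGens, hi2, hj2]
  · simp [σw, ρw, rhoLiftGens]

def rhoLift (hn : n ≤ 4) (a b : H) : UB n →* H :=
  PresentedGroup.toGroup (lift_rhoLiftGens_ubRels hn a b)

theorem rhoLift_of_inr (hn : n ≤ 4) (a b : H) (i : Fin (n - 1)) :
    rhoLift hn a b (PresentedGroup.of (Sum.inr i)) =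
      if (i : ℕ) = 0 then a else if (i : ℕ) = 1 then b else 1 :=
  PresentedGroup.toGroup.of _

open UnrestrictedLamplighter in
theorem commutator_not_fg (h3 : 3 ≤ n) (h4 : n ≤ 4) : ¬ (commutator (UB n)).FG := by
  intro hfg
  let f := rhoLift h4 (lampAt 0) shift
  let ρ₁ : UB n := PresentedGroup.of (Sum.inr ⟨0, by omega⟩)
  let ρ₂ : UB n := PresentedGroup.of (Sum.inr ⟨1, by omega⟩)
  have hf : ∀ k : ℤ, f ⁅ρ₁, ρ₂ ^ k⁆ = ⁅lampAt 0, shift ^ k⁆ := fun k => by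
    simp [f, ρ₁, ρ₂, rhoLift_of_inr]
  have himage_le : (commutator (UB n)).map f ≤ commutator UnrestrictedLamplighter :=
    (Subgroup.map_commutator _ _ f).trans_le (Subgroup.commutator_mono le_top le_top)
  have hinfinite : ((commutator (UB n)).map f : Set UnrestrictedLamplighter).Infinite :=
    Set.infinite_of_injective_forall_mem commutator_lampAt_zero_shift_zpow_injective fun k =>
      hf k ▸ Subgroup.mem_map_of_mem f (Subgroup.commutator_mem_commutator trivial trivial)
  have := finite_of_fg_of_le_commutator isMulTorsion_base himage_le (hfg.map f)
  exact hinfinite (Set.toFinite _)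

end UnivBraid

open UnivBraid in
/-- The commutator subgroups of the universal braid groups `UB_3` and `UB_4` are not
finitely generated. -/
theorem ub3_ub4_commutator_not_fg :
    ¬ (commutator (UB 3)).FG ∧ ¬ (commutator (UB 4)).FG :=
  ⟨commutator_not_fg le_rfl (by norm_num), commutator_not_fg (by norm_num) le_rfl⟩
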